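/- Corollary of Theorem A**: Let G be an abelian group and φ a surjective endomorphism of G. Then φ admits no null string if and only if φ is injective. -/

import Mathlib

/-!
If `φ` is injective, so is every iterate, and `φ^[k] x₀ = 0 = φ^[k] 0` forces `x₀ = 0`.
Conversely, a nonzero `a` with `φ a = 0` is not a periodic point of `φ`, since its forward orbit
falls into the fixed point `0`; choosing preimages repeatedly (surjectivity) gives a backward orbit
of `a`, and a backward orbit of a non-periodic point never repeats, so it is a null string.
-/

/-- A string of a self-map `f` is a sequence of pairwise distinct elements
with `f (x (n+1)) = x n` for all `n`. -/
def IsString {G : Type*} (f : G → G) (x : ℕ → G) : Prop :=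
  Function.Injective x ∧ ∀ n : ℕ, f (x (n + 1)) = x n

/-- A null string: a string with nonzero first term which is killed by some
positive iterate. -/
def IsNullString {G : Type*} [AddCommGroup G] (f : G → G) (x : ℕ → G) : Prop :=
  IsString f x ∧ x 0 ≠ 0 ∧ ∃ k : ℕ, 0 < k ∧ f^[k] (x 0) = 0

namespace Function

variable {α : Type*} {f : α → α} {a : α}

theorem notMem_periodicPts_of_apply_isFixedPt {b : α} (hb : IsFixedPt f b) (hab : f a = b)
    (ha : a ≠ b) : a ∉ periodicPts f := by
  rintro ⟨_ | d, hd, hper⟩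
  · exact (lt_irrefl 0 hd).elim
  · refine ha (hper.eq.symm.trans ?_)
    rw [iterate_succ_apply, hab]
    exact hb.iterate d

theorem injective_iterate_apply_of_rightInverse {g : α → α} (hg : RightInverse g f)
    (ha : a ∉ periodicPts f) : Injective fun n ↦ g^[n] a := by
  refine Injective.of_lt_imp_ne fun n m hnm heq ↦ ha ?_
  obtain ⟨d, rfl⟩ := Nat.exists_eq_add_of_lt hnm
  refine mem_periodicPts.2 ⟨d + 1, d.succ_pos, ?_⟩
  calc f^[d + 1] a = f^[d + 1] (f^[n] (g^[n] a)) := by rw [hg.iterate n a]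
    _ = f^[n + d + 1] (g^[n + d + 1] a) := by
      rw [← iterate_add_apply, add_comm (d + 1), ← add_assoc]
      exact congrArg _ heq
    _ = a := hg.iterate _ a

theorem exists_isString_of_notMem_periodicPts (hf : Surjective f) (ha : a ∉ periodicPts f) :
    ∃ x : ℕ → α, IsString f x ∧ x 0 = a :=
  ⟨fun n ↦ (surjInv hf)^[n] a,
    ⟨injective_iterate_apply_of_rightInverse (rightInverse_surjInv hf) ha,
      fun n ↦ (congrArg f (iterate_succ_apply' _ n a)).trans (surjInv_eq hf _)⟩, rfl⟩

end Function

open Function in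
theorem corollaryAstarstar {G : Type*} [AddCommGroup G] (φ : G →+ G)
    (hsurj : Function.Surjective φ) :
    (¬ ∃ x : ℕ → G, IsNullString (⇑φ) x) ↔ Function.Injective φ := by
  constructor
  · intro hnull
    rw [injective_iff_map_eq_zero]
    by_contra! ⟨a, ha, ha0⟩
    obtain ⟨x, hx, rfl⟩ := exists_isString_of_notMem_periodicPts hsurj
      (notMem_periodicPts_of_apply_isFixedPt (map_zero φ) ha ha0)
    exact hnull ⟨x, hx, ha0, 1, one_pos, ha⟩
  · rintro hinj ⟨x, -, hx0, k, -, hk⟩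
    exact hx0 (hinj.iterate k (hk.trans (iterate_map_zero φ k).symm))
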